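/- arXiv:2402.09296 — 3 statements merged into one kernel-verified Lean document; each statement's English description precedes it below -/
import Mathlib

section
/- For every natural number k and every complex number z, the probabilists' Hermite polynomial satisfies He_k(z) = i^k (2π)^{-1/2} e^{z²/2} ∫_{-∞}^{∞} e^{-t²/2} e^{-i·z·t} t^k dt, where the integral is with respect to Lebesgue measure on ℝ. -/
open MeasureTheory Finset Nat

/-- Probabilists' Hermite polynomial `He_k` evaluated at a complex argument. -/
noncomputable def He (k : ℕ) (x : ℂ) : ℂ :=
  (k ! : ℂ) * ∑ m ∈ Finset.range (k / 2 + 1),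
    (-1 : ℂ) ^ m * x ^ (k - 2 * m) / ((2 : ℂ) ^ m * (m ! : ℂ) * ((k - 2 * m)! : ℂ))

/-! Write `M_k(c) = ∫ e^{-t²/2 + ct} t^k dt`.
Since `d/dt e^{-t²/2 + ct} = (c - t) e^{-t²/2 + ct}`, integration by parts gives
`M_{k+1} = c M_k + k M_{k-1}`, and `M_0 = √(2π) e^{c²/2}` is the Gaussian integral. At `c = -iz`
the rescaled moments `i^k M_k` therefore satisfy the three-term recurrence
`He_{k+2}(z) = z He_{k+1}(z) - (k+1) He_k(z)` with the initial values of
`√(2π) e^{-z²/2} He_k(z)`.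
The explicit sum `He` is Mathlib's `Polynomial.hermite`, compared coefficientwise. -/

open Polynomial

theorem Nat.factorial_two_mul_eq (m : ℕ) : (2 * m)! = 2 ^ m * m ! * (2 * m - 1)‼ := by
  rcases m with _ | m
  · rfl
  · rw [show 2 * (m + 1) = (2 * m + 1) + 1 by ring, Nat.factorial_eq_mul_doubleFactorial,
      show 2 * m + 1 + 1 = 2 * (m + 1) by ring, Nat.doubleFactorial_two_mul]
    rfl

namespace Polynomial

theorem derivative_hermite_succ (n : ℕ) :
    derivative (hermite (n + 1)) = (n + 1 : ℤ[X]) * hermite n := by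
  induction n with
  | zero => simp
  | succ n ih =>
    rw [hermite_succ (n + 1), derivative_sub, derivative_mul, ih, derivative_mul, hermite_succ n]
    simp only [derivative_X, derivative_add, derivative_natCast, derivative_one]
    push_cast
    ring

theorem hermite_succ_succ (n : ℕ) :
    hermite (n + 2) = X * hermite (n + 1) - (n + 1 : ℤ[X]) * hermite n := by
  rw [hermite_succ (n + 1), derivative_hermite_succ]

theorem coeff_hermite_sub_two_mul {k m : ℕ} (h : 2 * m ≤ k) :
    (hermite k).coeff (k - 2 * m) * (2 ^ m * m ! * (k - 2 * m)! : ℕ) = (-1) ^ m * k ! := by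
  have heven : Even (k + (k - 2 * m)) := ⟨k - m, by omega⟩
  rw [coeff_hermite_of_even_add heven, show k - (k - 2 * m) = 2 * m by omega,
    Nat.mul_div_cancel_left _ two_pos]
  have hchoose := Nat.choose_mul_factorial_mul_factorial (Nat.sub_le k (2 * m))
  rw [show k - (k - 2 * m) = 2 * m by omega, Nat.factorial_two_mul_eq] at hchoose
  rw [← hchoose]
  push_cast
  ring

theorem aeval_hermite_eq_sum {R : Type*} [CommRing R] (k : ℕ) (x : R) :
    aeval x (hermite k) =
      ∑ m ∈ range (k / 2 + 1), ((hermite k).coeff (k - 2 * m) : R) * x ^ (k - 2 * m) := by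
  rw [aeval_eq_sum_range, natDegree_hermite]
  symm
  refine sum_of_injOn (fun m => k - 2 * m) ?_ ?_ ?_ ?_
  · intro a ha b hb hab
    simp only [coe_range, Set.mem_Iio] at ha hb
    simp only at hab
    omega
  · intro m hm
    simp only [coe_range, Set.mem_Iio] at hm ⊢
    omega
  · intro i hi hni
    have hodd : Odd (k + i) := by
      simp only [coe_range, Set.mem_Iio, Set.mem_image, not_exists, not_and] at hi hni
      rw [← Nat.not_even_iff_odd, Nat.even_add]
      intro hpar
      exact hni ((k - i) / 2) (by omega) (by grind)
    rw [coeff_hermite_of_odd_add hodd, zero_smul]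
  · intro m _
    rw [zsmul_eq_mul]

end Polynomial

theorem He_eq_aeval_hermite (k : ℕ) (z : ℂ) : He k z = aeval z (hermite k) := by
  rw [He, aeval_hermite_eq_sum, mul_sum]
  refine sum_congr rfl fun m hm => ?_
  have h2m : 2 * m ≤ k := by simp only [mem_range] at hm; omega
  have hcoeff := congrArg (Int.cast : ℤ → ℂ) (coeff_hermite_sub_two_mul h2m)
  push_cast at hcoeff
  have hD : (2 : ℂ) ^ m * m ! * (k - 2 * m)! ≠ 0 := by
    simp [Nat.factorial_ne_zero]
  rw [← eq_div_iff hD] at hcoeff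
  rw [hcoeff]
  ring

open Complex Real

noncomputable def gaussianMoment (b c : ℂ) (k : ℕ) : ℂ :=
  ∫ t : ℝ, cexp (-b * t ^ 2 + c * t) * t ^ k

theorem integrable_cexp_neg_mul_sq_add_mul_mul_pow {b : ℂ} (hb : 0 < b.re) (c : ℂ) (k : ℕ) :
    Integrable fun t : ℝ => cexp (-b * t ^ 2 + c * t) * t ^ k := by
  have hb2 : 0 < b.re / 2 := by positivity
  have hg : Integrable fun t : ℝ =>
      rexp (c.re ^ 2 / (2 * b.re)) * ‖t ^ k * rexp (-(b.re / 2) * t ^ 2)‖ := by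
    have := integrable_rpow_mul_exp_neg_mul_sq hb2 (s := k)
      (by linarith [k.cast_nonneg (α := ℝ)])
    simp only [Real.rpow_natCast] at this
    exact this.norm.const_mul _
  refine hg.mono' (by fun_prop) (ae_of_all _ fun t => ?_)
  have hexp : -b.re * t ^ 2 + c.re * t ≤ c.re ^ 2 / (2 * b.re) + -(b.re / 2) * t ^ 2 := by
    have : c.re ^ 2 / (2 * b.re) + -(b.re / 2) * t ^ 2 - (-b.re * t ^ 2 + c.re * t)
        = (b.re * t - c.re) ^ 2 / (2 * b.re) := by
      field_simp; ring
    linarith [show 0 ≤ (b.re * t - c.re) ^ 2 / (2 * b.re) by positivity]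
  simp only [norm_mul, norm_pow, norm_exp, Complex.norm_real, Real.norm_eq_abs, abs_exp]
  have hre : (-b * t ^ 2 + c * t).re = -b.re * t ^ 2 + c.re * t := by
    simp [← ofReal_pow]
  calc rexp (-b * t ^ 2 + c * t).re * |t| ^ k
      ≤ rexp (c.re ^ 2 / (2 * b.re) + -(b.re / 2) * t ^ 2) * |t| ^ k := by rw [hre]; gcongr
    _ = _ := by rw [Real.exp_add]; ring

theorem gaussianMoment_zero {b : ℂ} (hb : 0 < b.re) (c : ℂ) :
    gaussianMoment b c 0 = (π / b) ^ (1 / 2 : ℂ) * cexp (c ^ 2 / (4 * b)) := by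
  have hb' : (-b).re < 0 := by simpa using hb
  simpa [gaussianMoment, sub_eq_add_neg, neg_div, div_neg] using integral_cexp_quadratic hb' c 0

-- At `n = 0` the truncated `n - 1` is harmless: its term carries the factor `n`.
theorem two_mul_mul_gaussianMoment_succ {b : ℂ} (hb : 0 < b.re) (c : ℂ) (n : ℕ) :
    2 * b * gaussianMoment b c (n + 1) =
      c * gaussianMoment b c n + n * gaussianMoment b c (n - 1) := by
  set v : ℝ → ℂ := fun t => cexp (-b * t ^ 2 + c * t)
  have hv : ∀ t : ℝ, HasDerivAt v ((-2 * b * t + c) * v t) t := fun t => by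
    have hq : HasDerivAt (fun w : ℂ => -b * w ^ 2 + c * w) (-2 * b * t + c) t := by
      refine (((hasDerivAt_pow 2 (t : ℂ)).const_mul (-b)).fun_add
        ((hasDerivAt_id (t : ℂ)).const_mul c)).congr_deriv ?_
      push_cast
      ring
    exact hq.cexp.comp_ofReal.congr_deriv (mul_comm _ _)
  have hu : ∀ t : ℝ, HasDerivAt (fun t : ℝ => (t : ℂ) ^ n) (n * (t : ℂ) ^ (n - 1)) t :=
    fun t => (hasDerivAt_pow n (t : ℂ)).comp_ofReal
  have hI := integrable_cexp_neg_mul_sq_add_mul_mul_pow hb c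
  have huv' : (fun t : ℝ => (t : ℂ) ^ n * ((-2 * b * t + c) * v t)) =
      fun t => c * (v t * t ^ n) - 2 * b * (v t * t ^ (n + 1)) := by
    funext t; ring
  have hu'v : (fun t : ℝ => (n * (t : ℂ) ^ (n - 1)) * v t) =
      fun t => n * (v t * t ^ (n - 1)) := by
    funext t; ring
  have ibp := integral_mul_deriv_eq_deriv_mul_of_integrable (fun t _ => hu t) (fun t _ => hv t)
    (by rw [Pi.mul_def, huv']; exact ((hI n).const_mul c).sub ((hI (n + 1)).const_mul _))
    (by rw [Pi.mul_def, hu'v]; exact (hI (n - 1)).const_mul _)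
    (by rw [Pi.mul_def]; simpa only [mul_comm] using hI n)
  rw [huv', hu'v, integral_sub ((hI n).const_mul c) ((hI (n + 1)).const_mul _),
    integral_const_mul, integral_const_mul, integral_const_mul] at ibp
  simp only [gaussianMoment]
  linear_combination -ibp

theorem gaussianMoment_half_zero (c : ℂ) :
    gaussianMoment (1 / 2) c 0 = (√(2 * π) : ℂ) * cexp (c ^ 2 / 2) := by
  rw [gaussianMoment_zero (by norm_num), Real.sqrt_eq_rpow, ofReal_cpow (by positivity)]
  push_cast
  ring_nf

theorem gaussianMoment_half_succ (c : ℂ) (n : ℕ) :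
    gaussianMoment (1 / 2) c (n + 1) =
      c * gaussianMoment (1 / 2) c n + n * gaussianMoment (1 / 2) c (n - 1) := by
  simpa using two_mul_mul_gaussianMoment_succ (b := 1 / 2) (by norm_num) c n

theorem sqrt_two_pi_mul_cexp_mul_aeval_hermite_eq_gaussianMoment (z : ℂ) (k : ℕ) :
    (√(2 * π) : ℂ) * cexp (-z ^ 2 / 2) * aeval z (hermite k) =
      I ^ k * gaussianMoment (1 / 2) (-I * z) k := by
  induction k using Nat.twoStepInduction with
  | zero =>
    rw [gaussianMoment_half_zero, hermite_zero, aeval_C, map_one, mul_one, pow_zero, one_mul,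
      mul_pow, neg_sq, I_sq, neg_one_mul]
  | one =>
    rw [gaussianMoment_half_succ, gaussianMoment_half_zero, hermite_one, aeval_X, mul_pow, neg_sq,
      I_sq, neg_one_mul, Nat.cast_zero, zero_mul, add_zero, pow_one]
    linear_combination (√(2 * π) * cexp (-z ^ 2 / 2) * z : ℂ) * I_sq
  | more n ih₀ ih₁ =>
    rw [hermite_succ_succ, gaussianMoment_half_succ, add_tsub_cancel_right]
    simp only [map_sub, map_mul, aeval_X, map_add, map_natCast, map_one, pow_add, I_sq]
    push_cast
    linear_combination z * ih₁ - (n + 1) * ih₀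

theorem hermite_fourier_integral_rep (k : ℕ) (z : ℂ) :
    He k z = Complex.I ^ k * ((Real.sqrt (2 * Real.pi) : ℝ) : ℂ)⁻¹ *
        Complex.exp (z ^ 2 / 2) *
      ∫ t : ℝ, (Real.exp (-(t ^ 2) / 2) : ℂ) *
        Complex.exp (-Complex.I * z * (t : ℂ)) * (t : ℂ) ^ k := by
  have hintegral : ∫ t : ℝ, (rexp (-(t ^ 2) / 2) : ℂ) * cexp (-I * z * t) * (t : ℂ) ^ k =
      gaussianMoment (1 / 2) (-I * z) k := by
    congr 1 with t
    rw [ofReal_exp, ← Complex.exp_add]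
    push_cast
    ring_nf
  have hsqrt : (√(2 * π) : ℂ)⁻¹ * √(2 * π) = 1 :=
    inv_mul_cancel₀ (ofReal_ne_zero.2 (Real.sqrt_pos.2 (by positivity)).ne')
  have hexp : cexp (z ^ 2 / 2) * cexp (-z ^ 2 / 2) = 1 := by
    rw [← Complex.exp_add, neg_div, add_neg_cancel, Complex.exp_zero]
  rw [He_eq_aeval_hermite, hintegral]
  linear_combination
    ((√(2 * π) : ℂ)⁻¹ * cexp (z ^ 2 / 2)) *
        sqrt_two_pi_mul_cexp_mul_aeval_hermite_eq_gaussianMoment z k -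
      aeval z (hermite k) * cexp (z ^ 2 / 2) * cexp (-z ^ 2 / 2) * hsqrt -
      aeval z (hermite k) * hexp
end

section
/- Let n ≥ 1, let X be an n×n real matrix, let x, y be real numbers, set z = x + i·y, and let X_ℂ denote X viewed as a complex matrix (entrywise coercion). Then the real determinant det((x·1 − X)² + y²·1), viewed as a complex number, equals det(z·1 − X_ℂ) · det(z̄·1 − X_ℂᵀ), which equals the squared modulus |det(z·1 − X_ℂ)|²; moreover it equals the determinant of the 2n×2n complex block matrix with blocks [[0, i(z·1 − X_ℂ)], [i(z̄·1 − X_ℂᵀ), 0]]. -/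
/-!
Put `A = z • 1 - X_ℂ`. Since `X` is real, `Aᴴ = z̄ • 1 - X_ℂᵀ`, so the product of the two
determinants is `det A * conj (det A) = ‖det A‖²`. Transposing the second factor gives
`det (A * (z̄ • 1 - X_ℂ))`, and `(z - X)(z̄ - X) = (x - X)² + y²` because `z + z̄ = 2x` and
`z z̄ = x² + y²`. The anti-diagonal block matrix has determinant
`(-1)ⁿ · iⁿ · iⁿ · det A · det Aᴴ`, and `(-1)ⁿ iⁿ iⁿ = 1`.
-/

open Matrix

namespace Matrix

variable {n R : Type*} [Fintype n] [DecidableEq n] [CommRing R]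

theorem det_fromBlocks_zero_one_one_zero :
    (fromBlocks 0 1 1 0 : Matrix (n ⊕ n) (n ⊕ n) R).det = (-1) ^ Fintype.card n := by
  have h : (fromBlocks 0 1 1 0 : Matrix (n ⊕ n) (n ⊕ n) R) * fromBlocks 1 1 0 1 =
      fromBlocks 0 1 1 1 := by
    simp [fromBlocks_multiply]
  have := congrArg det h
  rwa [det_mul, det_fromBlocks_zero₂₁, det_one, one_mul, mul_one, det_fromBlocks_one₂₂,
    mul_one, zero_sub, det_neg, det_one, mul_one] at this

theorem det_fromBlocks_zero₁₁_zero₂₂ (B C : Matrix n n R) :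
    (fromBlocks 0 B C 0).det = (-1) ^ Fintype.card n * (B.det * C.det) := by
  have h : fromBlocks 0 B C 0 = fromBlocks 0 1 1 0 * fromBlocks C 0 0 B := by
    simp [fromBlocks_multiply]
  rw [h, det_mul, det_fromBlocks_zero_one_one_zero, det_fromBlocks_zero₂₁, mul_comm C.det]

theorem smul_one_sub_mul_smul_one_sub (M : Matrix n n R) (a b : R) :
    (a • 1 - M) * (b • 1 - M) = (a * b) • 1 - (a + b) • M + M * M := by
  simp only [sub_mul, mul_sub, smul_mul_assoc, mul_smul_comm, one_mul, mul_one]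
  module

end Matrix

open ComplexConjugate

variable {n : Type*} [Fintype n] [DecidableEq n]

theorem det_fromBlocks_zero_I_smul_zero (A B : Matrix n n ℂ) :
    (fromBlocks 0 (Complex.I • A) (Complex.I • B) 0).det = A.det * B.det := by
  rw [det_fromBlocks_zero₁₁_zero₂₂, det_smul, det_smul]
  have hI : (-1 : ℂ) ^ Fintype.card n *
      (Complex.I ^ Fintype.card n * Complex.I ^ Fintype.card n) = 1 := by
    rw [← mul_pow, ← mul_pow, Complex.I_mul_I, neg_one_mul, neg_neg, one_pow]
  linear_combination A.det * B.det * hI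

theorem smul_one_sub_mul_conj_smul_one_sub (z : ℂ) (M : Matrix n n ℂ) :
    (z • 1 - M) * (conj z • 1 - M) = ((z.re : ℂ) • 1 - M) ^ 2 + ((z.im : ℂ) ^ 2) • 1 := by
  have hre : z + conj z = 2 * (z.re : ℂ) := by rw [Complex.add_conj]; push_cast; ring
  have hnorm : z * conj z = (z.re : ℂ) ^ 2 + (z.im : ℂ) ^ 2 := by
    rw [Complex.mul_conj, Complex.normSq_apply]; push_cast; ring
  rw [smul_one_sub_mul_smul_one_sub, sq, smul_one_sub_mul_smul_one_sub, hre, hnorm]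
  module

omit [Fintype n] in
theorem conjTranspose_smul_one_sub_map_ofReal (z : ℂ) (X : Matrix n n ℝ) :
    (z • 1 - X.map ((↑) : ℝ → ℂ))ᴴ = conj z • 1 - (X.map ((↑) : ℝ → ℂ))ᵀ := by
  ext i j
  simp [conjTranspose_apply, one_apply, apply_ite (star : ℂ → ℂ), eq_comm]

theorem det_real_quadratic_eq_complex_factorization_general
    (n : ℕ) (X : Matrix (Fin n) (Fin n) ℝ) (x y : ℝ)
    (z : ℂ) (hz : z = (x : ℂ) + Complex.I * (y : ℂ))
    (Xc : Matrix (Fin n) (Fin n) ℂ) (hXc : Xc = X.map (fun a => (a : ℂ))) :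
    (((((x • (1 : Matrix (Fin n) (Fin n) ℝ) - X) ^ 2 +
        (y ^ 2) • (1 : Matrix (Fin n) (Fin n) ℝ)).det : ℝ) : ℂ) =
      (z • (1 : Matrix (Fin n) (Fin n) ℂ) - Xc).det *
        ((starRingEnd ℂ z) • (1 : Matrix (Fin n) (Fin n) ℂ) - Xcᵀ).det) ∧
    ((z • (1 : Matrix (Fin n) (Fin n) ℂ) - Xc).det *
        ((starRingEnd ℂ z) • (1 : Matrix (Fin n) (Fin n) ℂ) - Xcᵀ).det =
      ((‖(z • (1 : Matrix (Fin n) (Fin n) ℂ) - Xc).det‖) ^ 2 : ℝ)) ∧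
    ((z • (1 : Matrix (Fin n) (Fin n) ℂ) - Xc).det *
        ((starRingEnd ℂ z) • (1 : Matrix (Fin n) (Fin n) ℂ) - Xcᵀ).det =
      (Matrix.fromBlocks (0 : Matrix (Fin n) (Fin n) ℂ)
        (Complex.I • (z • (1 : Matrix (Fin n) (Fin n) ℂ) - Xc))
        (Complex.I • ((starRingEnd ℂ z) • (1 : Matrix (Fin n) (Fin n) ℂ) - Xcᵀ))
        (0 : Matrix (Fin n) (Fin n) ℂ)).det) := by
  have hre : z.re = x := by simp [hz]
  have him : z.im = y := by simp [hz]
  subst hXc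
  set A := z • (1 : Matrix (Fin n) (Fin n) ℂ) - X.map (↑)
  refine ⟨?_, ?_, (det_fromBlocks_zero_I_smul_zero _ _).symm⟩
  · have hmap : ((x • (1 : Matrix (Fin n) (Fin n) ℝ) - X) ^ 2 + (y ^ 2) • 1).map
        ((↑) : ℝ → ℂ) = A * (conj z • 1 - X.map (↑)) := by
      rw [smul_one_sub_mul_conj_smul_one_sub, hre, him]
      ext i j
      simp [sq, Matrix.mul_apply, one_apply, apply_ite ((↑) : ℝ → ℂ)]
    have hBt : conj z • 1 - (X.map ((↑) : ℝ → ℂ))ᵀ = (conj z • 1 - X.map (↑))ᵀ := by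
      rw [transpose_sub, transpose_smul, transpose_one]
    rw [hBt, det_transpose, ← det_mul, ← hmap, ← Complex.ofRealHom_eq_coe, RingHom.map_det]
    rfl
  · rw [← conjTranspose_smul_one_sub_map_ofReal, det_conjTranspose, Complex.star_def, Complex.mul_conj']
    push_cast
    rfl

theorem det_real_quadratic_eq_complex_factorization
    (n : ℕ) (hn : 1 ≤ n) (X : Matrix (Fin n) (Fin n) ℝ) (x y : ℝ)
    (z : ℂ) (hz : z = (x : ℂ) + Complex.I * (y : ℂ))
    (Xc : Matrix (Fin n) (Fin n) ℂ) (hXc : Xc = X.map (fun a => (a : ℂ))) :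
    (((((x • (1 : Matrix (Fin n) (Fin n) ℝ) - X) ^ 2 +
        (y ^ 2) • (1 : Matrix (Fin n) (Fin n) ℝ)).det : ℝ) : ℂ) =
      (z • (1 : Matrix (Fin n) (Fin n) ℂ) - Xc).det *
        ((starRingEnd ℂ z) • (1 : Matrix (Fin n) (Fin n) ℂ) - Xcᵀ).det) ∧
    ((z • (1 : Matrix (Fin n) (Fin n) ℂ) - Xc).det *
        ((starRingEnd ℂ z) • (1 : Matrix (Fin n) (Fin n) ℂ) - Xcᵀ).det =
      ((‖(z • (1 : Matrix (Fin n) (Fin n) ℂ) - Xc).det‖) ^ 2 : ℝ)) ∧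
    ((z • (1 : Matrix (Fin n) (Fin n) ℂ) - Xc).det *
        ((starRingEnd ℂ z) • (1 : Matrix (Fin n) (Fin n) ℂ) - Xcᵀ).det =
      (Matrix.fromBlocks (0 : Matrix (Fin n) (Fin n) ℂ)
        (Complex.I • (z • (1 : Matrix (Fin n) (Fin n) ℂ) - Xc))
        (Complex.I • ((starRingEnd ℂ z) • (1 : Matrix (Fin n) (Fin n) ℂ) - Xcᵀ))
        (0 : Matrix (Fin n) (Fin n) ℂ)).det) :=
  det_real_quadratic_eq_complex_factorization_general n X x y z hz Xc hXc
end

section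
/- Fix a natural number M. For integers N > M and real x, define Θ_N^{(M)}(x) = Γ(N−M+1, N·x) / Γ(N−M+1), where Γ(s, a) = ∫_a^∞ u^{s−1} e^{−u} du for real a and Γ(s) = Γ(s, 0). Then: (i) for every x with 0 ≤ x < 1, Θ_N^{(M)}(x) → 1 as N → ∞; and (ii) for every x > 1, Θ_N^{(M)}(x) → 0 as N → ∞. -/
/-!
With `n = N - M`, `Θ_N^{(M)}(x)` is the upper tail at `N x` of a Gamma law of shape `n + 1`,
whose mean `n + 1` is `N + O(1)`. Exponential tilting by `exp (t (u - N x))` with the optimal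
`t = 1 - 1/x` bounds either tail (the upper one for `x > 1`, the lower one for `x < 1`) by
`x ^ (n + 1) * (e ^ (1 - x)) ^ N`, which decays like `(x e ^ (1 - x)) ^ N` since `x e ^ (1 - x) < 1`
for `x ≠ 1`.
-/

open MeasureTheory Filter Nat

/-- `Θ_N^{(M)}(x) = Γ(N−M+1, N·x)/Γ(N−M+1)`, with
`Γ(N−M+1, a) = ∫_a^∞ u^{N−M} e^{−u} du` the upper incomplete gamma function (extended to
any real lower limit `a`) and `Γ(N−M+1) = (N−M)!`. -/
noncomputable def ThetaNM (M N : ℕ) (x : ℝ) : ℝ :=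
  (∫ u in Set.Ioi ((N : ℝ) * x), u ^ (N - M) * Real.exp (-u)) / ((N - M)! : ℝ)

open Set Real

theorem integral_pow_mul_exp_neg_mul_Ioi (n : ℕ) {c : ℝ} (hc : 0 < c) :
    ∫ u in Ioi 0, u ^ n * exp (-(c * u)) = n ! / c ^ (n + 1) := by
  have h := integral_rpow_mul_exp_neg_mul_Ioi (a := n + 1) (by positivity) hc
  rw [add_sub_cancel_right, Gamma_nat_eq_factorial, ← Nat.cast_succ, rpow_natCast,
    one_div_pow, one_div_mul_eq_div] at h
  rw [← h]
  refine setIntegral_congr_fun measurableSet_Ioi fun u _ => ?_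
  simp [← rpow_natCast]

theorem integrableOn_pow_mul_exp_neg_mul_Ioi (n : ℕ) {c : ℝ} (hc : 0 < c) :
    IntegrableOn (fun u : ℝ => u ^ n * exp (-(c * u))) (Ioi 0) :=
  Integrable.of_integral_ne_zero <| by
    rw [integral_pow_mul_exp_neg_mul_Ioi n hc]; positivity

theorem integrableOn_pow_mul_exp_neg_Ioi (n : ℕ) :
    IntegrableOn (fun u : ℝ => u ^ n * exp (-u)) (Ioi 0) := by
  simpa using integrableOn_pow_mul_exp_neg_mul_Ioi n one_pos

theorem integral_pow_mul_exp_neg_Ioi (n : ℕ) :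
    ∫ u in Ioi 0, u ^ n * exp (-u) = n ! := by
  simpa using integral_pow_mul_exp_neg_mul_Ioi n one_pos

/-- Chernoff bound: on `S` the factor `exp (t * (u - a))` is at least `1`, and inserting it turns
the integrand into a Gamma density of rate `1 - t`. -/
theorem setIntegral_pow_mul_exp_neg_le (n : ℕ) {S : Set ℝ} (hS : MeasurableSet S)
    (hS0 : S ⊆ Ioi 0) {t a : ℝ} (ht : t < 1) (htS : ∀ u ∈ S, 0 ≤ t * (u - a)) :
    ∫ u in S, u ^ n * exp (-u) ≤ exp (-(t * a)) * (n ! / (1 - t) ^ (n + 1)) := by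
  have h1t : 0 < 1 - t := sub_pos.2 ht
  have hint : IntegrableOn (fun u => exp (-(t * a)) * (u ^ n * exp (-((1 - t) * u)))) (Ioi 0) :=
    (integrableOn_pow_mul_exp_neg_mul_Ioi n h1t).const_mul _
  calc ∫ u in S, u ^ n * exp (-u)
      ≤ ∫ u in S, exp (-(t * a)) * (u ^ n * exp (-((1 - t) * u))) := by
        refine setIntegral_mono_on ((integrableOn_pow_mul_exp_neg_Ioi n).mono_set hS0)
          (hint.mono_set hS0) hS fun u hu => ?_
        have hu0 : 0 ≤ u := (hS0 hu).le
        calc u ^ n * exp (-u) ≤ u ^ n * exp (-u) * exp (t * (u - a)) :=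
              le_mul_of_one_le_right (by positivity) (one_le_exp (htS u hu))
          _ = exp (-(t * a)) * (u ^ n * exp (-((1 - t) * u))) := by
              rw [mul_comm (exp _), mul_assoc, mul_assoc, ← exp_add, ← exp_add]; ring_nf
    _ ≤ ∫ u in Ioi 0, exp (-(t * a)) * (u ^ n * exp (-((1 - t) * u))) :=
        setIntegral_mono_set hint
          (by filter_upwards [ae_restrict_mem measurableSet_Ioi] with u (hu : 0 < u); positivity)
          (ae_of_all _ hS0)
    _ = exp (-(t * a)) * (n ! / (1 - t) ^ (n + 1)) := by
        rw [integral_const_mul, integral_pow_mul_exp_neg_mul_Ioi n h1t]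

theorem setIntegral_pow_mul_exp_neg_le_of_tilt (n N : ℕ) {x : ℝ} (hx : 0 < x) {S : Set ℝ}
    (hS : MeasurableSet S) (hS0 : S ⊆ Ioi 0) (htS : ∀ u ∈ S, 0 ≤ (1 - x⁻¹) * (u - N * x)) :
    ∫ u in S, u ^ n * exp (-u) ≤ x ^ (n + 1) * exp (1 - x) ^ N * n ! := by
  refine (setIntegral_pow_mul_exp_neg_le n hS hS0 (by simpa using hx) htS).trans_eq ?_
  rw [show -((1 - x⁻¹) * (N * x)) = N * (1 - x) by field_simp; ring, exp_nat_mul,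
    sub_sub_cancel, inv_pow, div_inv_eq_mul]
  ring

theorem mul_exp_one_sub_lt_one {x : ℝ} (hx : x ≠ 1) : x * exp (1 - x) < 1 := by
  have h := add_one_lt_exp (sub_ne_zero.2 hx)
  calc x * exp (1 - x) < exp (x - 1) * exp (1 - x) := by
        gcongr; linarith
    _ = 1 := by rw [← exp_add]; simp

theorem tendsto_pow_sub_add_one_mul_exp_pow (M : ℕ) {x : ℝ} (hx0 : 0 < x) (hx1 : x ≠ 1) :
    Tendsto (fun N : ℕ => x ^ (N - M + 1) * exp (1 - x) ^ N) atTop (nhds 0) := by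
  have h := (tendsto_pow_atTop_nhds_zero_of_lt_one (by positivity)
    (mul_exp_one_sub_lt_one hx1)).const_mul (x / x ^ M)
  rw [mul_zero] at h
  refine h.congr' ?_
  filter_upwards [eventually_ge_atTop M] with N hN
  rw [pow_succ, pow_sub₀ x hx0.ne' hN, mul_pow]
  ring

theorem thetaNM_zero (M N : ℕ) : ThetaNM M N 0 = 1 := by
  simp [ThetaNM, integral_pow_mul_exp_neg_Ioi, factorial_ne_zero]

theorem one_sub_thetaNM (M N : ℕ) {x : ℝ} (hx : 0 ≤ x) :
    1 - ThetaNM M N x = (∫ u in Ioc 0 (N * x), u ^ (N - M) * exp (-u)) / (N - M)! := by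
  have hNx : (0 : ℝ) ≤ N * x := by positivity
  have hint := integrableOn_pow_mul_exp_neg_Ioi (N - M)
  have h := setIntegral_union (Ioc_disjoint_Ioi le_rfl) measurableSet_Ioi
    (hint.mono_set Ioc_subset_Ioi_self) (hint.mono_set (Ioi_subset_Ioi hNx))
  rw [Ioc_union_Ioi_eq_Ioi hNx, integral_pow_mul_exp_neg_Ioi] at h
  rw [ThetaNM, eq_div_iff (by positivity), sub_mul, div_mul_cancel₀ _ (by positivity)]
  linarith

theorem thetaNM_nonneg (M N : ℕ) {x : ℝ} (hx : 0 ≤ x) : 0 ≤ ThetaNM M N x := by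
  refine div_nonneg (setIntegral_nonneg measurableSet_Ioi fun u hu => ?_) (by positivity)
  have : 0 ≤ u := (by positivity : (0 : ℝ) ≤ N * x).trans (le_of_lt hu)
  positivity

theorem thetaNM_le_one (M N : ℕ) {x : ℝ} (hx : 0 ≤ x) : ThetaNM M N x ≤ 1 := by
  rw [← sub_nonneg, one_sub_thetaNM M N hx]
  refine div_nonneg (setIntegral_nonneg measurableSet_Ioc fun u hu => ?_) (by positivity)
  have : 0 ≤ u := hu.1.le
  positivity

theorem thetaNM_le (M N : ℕ) {x : ℝ} (hx : 1 ≤ x) :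
    ThetaNM M N x ≤ x ^ (N - M + 1) * exp (1 - x) ^ N := by
  have hx0 : 0 < x := one_pos.trans_le hx
  rw [ThetaNM, div_le_iff₀ (by positivity)]
  refine setIntegral_pow_mul_exp_neg_le_of_tilt _ N hx0 measurableSet_Ioi
    (Ioi_subset_Ioi (by positivity)) fun u hu => mul_nonneg ?_ (sub_nonneg.2 (le_of_lt hu))
  simpa using inv_le_one_of_one_le₀ hx

theorem one_sub_thetaNM_le (M N : ℕ) {x : ℝ} (hx0 : 0 < x) (hx1 : x ≤ 1) :
    1 - ThetaNM M N x ≤ x ^ (N - M + 1) * exp (1 - x) ^ N := by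
  rw [one_sub_thetaNM M N hx0.le, div_le_iff₀ (by positivity)]
  refine setIntegral_pow_mul_exp_neg_le_of_tilt _ N hx0 measurableSet_Ioc
    Ioc_subset_Ioi_self fun u hu => mul_nonneg_of_nonpos_of_nonpos ?_ (sub_nonpos.2 hu.2)
  simpa using one_le_inv₀ hx0 |>.2 hx1

theorem thetaNM_tendsto (M : ℕ) :
    (∀ x : ℝ, 0 ≤ x → x < 1 →
        Tendsto (fun N : ℕ => ThetaNM M N x) atTop (nhds 1)) ∧
      (∀ x : ℝ, 1 < x →
        Tendsto (fun N : ℕ => ThetaNM M N x) atTop (nhds 0)) := by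
  refine ⟨fun x hx0 hx1 => ?_, fun x hx1 => ?_⟩
  · rcases hx0.eq_or_lt with rfl | hx0
    · simp only [thetaNM_zero, tendsto_const_nhds]
    have h := squeeze_zero (fun N => sub_nonneg.2 (thetaNM_le_one M N hx0.le))
      (fun N => one_sub_thetaNM_le M N hx0 hx1.le)
      (tendsto_pow_sub_add_one_mul_exp_pow M hx0 hx1.ne)
    simpa using h.const_sub 1
  · exact squeeze_zero (fun N => thetaNM_nonneg M N (by linarith))
      (fun N => thetaNM_le M N hx1.le) (tendsto_pow_sub_add_one_mul_exp_pow M (by linarith) hx1.ne')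
end
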